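/- For any density matrix ρ on ℂ^d there exists a pure-state decomposition ρ = Σ_j λ_j |μ_j⟩⟨μ_j| which is conjugate-orthogonal: √(λ_i λ_j) ⟨μ_i, μ_j*⟩ = δ_{ij} D_j, where D_j are the eigenvalues of √(√ρ ρᵀ √ρ). Consequently Σ_j λ_j |⟨μ_j*, μ_j⟩| = Tr√(√ρ ρᵀ √ρ) = √F(ρ, ρᵀ). -/

import Mathlib

/-!
Let `B = √ρ`. The matrix `S = Bᵀ B` is complex symmetric, so it has a Takagi factorization
`S = Q Σ Qᵀ`. Then `N = B Q̄` satisfies `N Nᴴ = ρ` and `Nᵀ N = Σ`: normalizing the columns of `N`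
gives the decomposition, and `Nᵀ N = Σ` is exactly conjugate-orthogonality. Moreover
`B ρᵀ B = Sᴴ S = (Q̄ Σ Qᵀ)²`, so `√(B ρᵀ B) = Q̄ Σ Qᵀ`, whose trace is `Σᵢ σᵢ`.

Takagi's factorization comes from the antilinear map `T x = S x̄`: symmetry of `S` gives
`⟪T x, y⟫ = ⟪T y, x⟫`, hence `T²` is linear with eigenvalues `σ² ≥ 0`. If `T² u = σ² u`, then
`T u + σ u` (or `i u`, when that vanishes) is an eigenvector of `T` for `σ`, and the orthogonal
complement of such a vector is again `T`-invariant.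
-/

open Matrix
open scoped ComplexOrder

/-- Singular values of a complex square matrix: square roots of eigenvalues of `Aᴴ * A`. -/
noncomputable def singularValues {n : Type*} [Fintype n] [DecidableEq n]
    (A : Matrix n n ℂ) : n → ℝ :=
  fun i => Real.sqrt ((Matrix.isHermitian_conjTranspose_mul_self A).eigenvalues i)

/-- Trace norm: sum of singular values. -/
noncomputable def traceNorm {n : Type*} [Fintype n] [DecidableEq n]
    (A : Matrix n n ℂ) : ℝ := ∑ i, singularValues A i

/-- Positive-semidefinite square root (zero for non-PSD input). -/
noncomputable def msqrt {n : Type*} [Fintype n] [DecidableEq n]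
    (A : Matrix n n ℂ) : Matrix n n ℂ :=
  open scoped Classical in
  if h : A.PosSemidef then
    (h.1.eigenvectorUnitary : Matrix n n ℂ) *
      Matrix.diagonal (fun i => ((Real.sqrt (h.1.eigenvalues i) : ℝ) : ℂ)) *
      (star h.1.eigenvectorUnitary : Matrix n n ℂ)
  else 0

/-- Root fidelity √F(ρ,σ) = Tr √(√ρ σ √ρ). -/
noncomputable def rootFid {n : Type*} [Fintype n] [DecidableEq n]
    (ρ σ : Matrix n n ℂ) : ℝ := ((msqrt (msqrt ρ * σ * msqrt ρ)).trace).re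

/-- A density matrix: positive semidefinite with unit trace. -/
def IsDensity {n : Type*} [Fintype n] [DecidableEq n] (ρ : Matrix n n ℂ) : Prop :=
  ρ.PosSemidef ∧ ρ.trace = 1

/-- Partial transpose on the second tensor factor. -/
noncomputable def ptB {dA dB : ℕ} (X : Matrix (Fin dA × Fin dB) (Fin dA × Fin dB) ℂ) :
    Matrix (Fin dA × Fin dB) (Fin dA × Fin dB) ℂ :=
  Matrix.of fun p q => X (p.1, q.2) (q.1, p.2)

/-- Hermitian inner product ⟨x,y⟩ = ∑ conj(xᵢ) yᵢ. -/
noncomputable def hinner {ι : Type*} [Fintype ι] (x y : ι → ℂ) : ℂ := ∑ i, star (x i) * y i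

/-- Entrywise complex conjugate of a vector. -/
noncomputable def cconj {ι : Type*} (x : ι → ℂ) : ι → ℂ := fun i => star (x i)

open scoped InnerProductSpace

lemma Orthonormal.fin_cons {𝕜 E : Type*} [RCLike 𝕜] [NormedAddCommGroup E]
    [InnerProductSpace 𝕜 E] {k : ℕ} {v : Fin k → E} (hv : Orthonormal 𝕜 v) {x : E}
    (hx : ‖x‖ = 1) (hxv : ∀ i, ⟪x, v i⟫_𝕜 = 0) :
    Orthonormal 𝕜 (Fin.cons x v : Fin (k + 1) → E) := by
  refine ⟨Fin.cons hx hv.1, fun i j hij => ?_⟩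
  cases i using Fin.cases <;> cases j using Fin.cases
  · exact absurd rfl hij
  · simp [hxv]
  · simp [inner_eq_zero_symm.mp (hxv _)]
  · exact hv.2 (by simpa using hij)

namespace Matrix

variable {n : Type*} [Fintype n]

def takagiMap (S : Matrix n n ℂ) : EuclideanSpace ℂ n →ₗ⋆[ℂ] EuclideanSpace ℂ n where
  toFun x := WithLp.toLp 2 (S *ᵥ star x.ofLp)
  map_add' x y := by simp [mulVec_add]
  map_smul' c x := by simp [star_smul, mulVec_smul]

lemma takagiMap_apply (S : Matrix n n ℂ) (x : EuclideanSpace ℂ n) :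
    (takagiMap S x).ofLp = S *ᵥ star x.ofLp := rfl

lemma takagiMap_ofReal_smul (S : Matrix n n ℂ) (r : ℝ) (x : EuclideanSpace ℂ n) :
    takagiMap S ((r : ℂ) • x) = (r : ℂ) • takagiMap S x := by
  rw [map_smulₛₗ, Complex.conj_ofReal]

variable {S : Matrix n n ℂ}

lemma inner_takagiMap_comm (hS : S.IsSymm) (x y : EuclideanSpace ℂ n) :
    ⟪takagiMap S x, y⟫_ℂ = ⟪takagiMap S y, x⟫_ℂ := by
  have hSH : Sᴴᵀ = Sᴴ := by rw [← conjTranspose_transpose_eq_transpose_conjTranspose, hS.eq]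
  simp only [EuclideanSpace.inner_eq_star_dotProduct, takagiMap_apply, star_mulVec, star_star]
  conv_lhs => rw [← hSH, vecMul_transpose, dotProduct_mulVec, dotProduct_comm]

lemma inner_takagiMap_takagiMap_self (hS : S.IsSymm) (u : EuclideanSpace ℂ n) :
    ⟪takagiMap S (takagiMap S u), u⟫_ℂ = (‖takagiMap S u‖ : ℂ) ^ 2 := by
  rw [inner_takagiMap_comm hS, inner_self_eq_norm_sq_to_K]
  rfl

lemma eq_sq_of_takagiMap_takagiMap_eq_smul (hS : S.IsSymm) {u : EuclideanSpace ℂ n}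
    (hu : u ≠ 0) {c : ℂ} (h : takagiMap S (takagiMap S u) = c • u) :
    c = ((‖takagiMap S u‖ / ‖u‖ : ℝ) : ℂ) ^ 2 := by
  have hu' : (‖u‖ : ℂ) ≠ 0 := by simpa using hu
  have key := inner_takagiMap_takagiMap_self hS u
  rw [h, inner_smul_left, inner_self_eq_norm_sq_to_K] at key
  have hc : star c = (‖takagiMap S u‖ : ℂ) ^ 2 / (‖u‖ : ℂ) ^ 2 :=
    eq_div_of_mul_eq (pow_ne_zero 2 hu') key
  rw [← star_star c, hc]
  simp [div_pow]

lemma exists_takagiMap_eq_smul_of_takagiMap_takagiMap_eq_smul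
    {W : Submodule ℂ (EuclideanSpace ℂ n)} (hW : ∀ x ∈ W, takagiMap S x ∈ W)
    {u : EuclideanSpace ℂ n} (huW : u ∈ W) (hu : u ≠ 0) (σ : ℝ)
    (h : takagiMap S (takagiMap S u) = (σ : ℂ) ^ 2 • u) :
    ∃ x ∈ W, x ≠ 0 ∧ takagiMap S x = (σ : ℂ) • x := by
  by_cases hw : takagiMap S u + (σ : ℂ) • u = 0
  · refine ⟨Complex.I • u, W.smul_mem _ huW, smul_ne_zero Complex.I_ne_zero hu, ?_⟩
    rw [map_smulₛₗ, eq_neg_of_add_eq_zero_left hw, Complex.conj_I, smul_neg, neg_smul, neg_neg,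
      smul_comm]
  · refine ⟨_, W.add_mem (hW u huW) (W.smul_mem _ huW), hw, ?_⟩
    rw [map_add, takagiMap_ofReal_smul, h, smul_add, smul_smul, add_comm, sq]

lemma exists_takagiMap_eq_smul (hS : S.IsSymm) {W : Submodule ℂ (EuclideanSpace ℂ n)}
    (hW₀ : W ≠ ⊥) (hW : ∀ x ∈ W, takagiMap S x ∈ W) :
    ∃ x ∈ W, ‖x‖ = 1 ∧ ∃ σ : ℝ, 0 ≤ σ ∧ takagiMap S x = (σ : ℂ) • x := by
  have : Nontrivial W := Submodule.nontrivial_iff_ne_bot.mpr hW₀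
  obtain ⟨c, hc⟩ := Module.End.exists_eigenvalue
    (((takagiMap S).comp (takagiMap S)).restrict fun x hx => hW _ (hW x hx))
  obtain ⟨⟨u, huW⟩, hu⟩ := hc.exists_hasEigenvector
  have hu0 : u ≠ 0 := by simpa using hu.2
  have hTTu : takagiMap S (takagiMap S u) = c • u := congrArg Subtype.val hu.apply_eq_smul
  obtain ⟨x, hxW, hx0, hx⟩ := exists_takagiMap_eq_smul_of_takagiMap_takagiMap_eq_smul hW huW hu0
    _ (eq_sq_of_takagiMap_takagiMap_eq_smul hS hu0 hTTu ▸ hTTu)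
  refine ⟨((‖x‖⁻¹ : ℝ) : ℂ) • x, W.smul_mem _ hxW, by simp [norm_smul, hx0],
    ‖takagiMap S u‖ / ‖u‖, by positivity, ?_⟩
  rw [takagiMap_ofReal_smul, hx, smul_comm]

lemma takagiMap_mem_orthogonal_singleton (hS : S.IsSymm) {x : EuclideanSpace ℂ n} {σ : ℝ}
    (hx : takagiMap S x = (σ : ℂ) • x) {y : EuclideanSpace ℂ n} (hy : y ∈ (ℂ ∙ x)ᗮ) :
    takagiMap S y ∈ (ℂ ∙ x)ᗮ := by
  rw [Submodule.mem_orthogonal_singleton_iff_inner_right] at hy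
  rw [Submodule.mem_orthogonal_singleton_iff_inner_left, inner_takagiMap_comm hS, hx,
    inner_smul_left, hy, mul_zero]

lemma exists_orthonormal_takagiMap_eq_smul (hS : S.IsSymm) (k : ℕ) :
    ∀ W : Submodule ℂ (EuclideanSpace ℂ n), Module.finrank ℂ W = k →
      (∀ x ∈ W, takagiMap S x ∈ W) →
      ∃ (v : Fin k → EuclideanSpace ℂ n) (σ : Fin k → ℝ), Orthonormal ℂ v ∧ (∀ i, v i ∈ W) ∧
        ∀ i, 0 ≤ σ i ∧ takagiMap S (v i) = (σ i : ℂ) • v i := by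
  induction k with
  | zero => exact fun _ _ _ => ⟨finZeroElim, finZeroElim, orthonormal_iff_ite.mpr finZeroElim,
      finZeroElim, finZeroElim⟩
  | succ k ih =>
    intro W hrank hW
    have hW₀ : W ≠ ⊥ := by rintro rfl; simp at hrank
    obtain ⟨x, hxW, hx1, σ₀, hσ₀, hx⟩ := exists_takagiMap_eq_smul hS hW₀ hW
    have hx0 : x ≠ 0 := by rintro rfl; simp at hx1
    obtain ⟨v, σ, hv, hvW, hvσ⟩ := ih ((ℂ ∙ x)ᗮ ⊓ W)
      (Submodule.finrank_add_inf_finrank_orthogonal'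
        ((Submodule.span_singleton_le_iff_mem x W).mpr hxW)
        (by rw [finrank_span_singleton hx0, hrank, add_comm]))
      (fun y ⟨hy, hyW⟩ => ⟨takagiMap_mem_orthogonal_singleton hS hx hy, hW y hyW⟩)
    refine ⟨Fin.cons x v, Fin.cons σ₀ σ,
      hv.fin_cons hx1 fun i => Submodule.mem_orthogonal_singleton_iff_inner_right.mp (hvW i).1,
      Fin.cons hxW fun i => (hvW i).2, Fin.cons ⟨hσ₀, hx⟩ hvσ⟩

section UnitaryConj

variable {α : Type*} [CommRing α] [StarRing α] [DecidableEq n] {Q : Matrix n n α}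

lemma map_star_mul_transpose_of_mem_unitaryGroup (hQ : Q ∈ unitaryGroup n α) :
    Q.map star * Qᵀ = 1 := by
  rw [← conjTranspose_transpose, ← transpose_mul, ← star_eq_conjTranspose,
    mem_unitaryGroup_iff.mp hQ, transpose_one]

lemma transpose_mul_map_star_of_mem_unitaryGroup (hQ : Q ∈ unitaryGroup n α) :
    Qᵀ * Q.map star = 1 := by
  rw [← conjTranspose_transpose, ← transpose_mul, ← star_eq_conjTranspose,
    mem_unitaryGroup_iff'.mp hQ, transpose_one]

end UnitaryConj

theorem exists_takagi_factorization [DecidableEq n] (hS : S.IsSymm) :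
    ∃ Q ∈ unitaryGroup n ℂ, ∃ σ : n → ℝ, (∀ i, 0 ≤ σ i) ∧
      S = Q * diagonal (fun i => (σ i : ℂ)) * Qᵀ := by
  obtain ⟨v, σ, hv, -, hvσ⟩ := exists_orthonormal_takagiMap_eq_smul hS (Fintype.card n) ⊤
    (by simp) fun _ _ => Submodule.mem_top
  let e := Fintype.equivFin n
  let Q : Matrix n n ℂ := of fun i j => v (e j) i
  have hQ : Q ∈ unitaryGroup n ℂ := by
    rw [mem_unitaryGroup_iff']
    ext i j
    have := orthonormal_iff_ite.mp hv (e i) (e j)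
    rw [EuclideanSpace.inner_eq_star_dotProduct, dotProduct_comm] at this
    simp only [e.apply_eq_iff_eq] at this
    simpa [mul_apply, dotProduct, one_apply, Q] using this
  have hcol : S * Q.map star = Q * diagonal (fun i => (σ (e i) : ℂ)) := by
    ext i j
    have := congrFun (congrArg WithLp.ofLp (hvσ (e j)).2) i
    rw [mul_diagonal, mul_apply]
    simpa [takagiMap_apply, mulVec, dotProduct, Q, mul_comm] using this
  refine ⟨Q, hQ, fun i => σ (e i), fun i => (hvσ (e i)).1, ?_⟩
  rw [← hcol, mul_assoc, map_star_mul_transpose_of_mem_unitaryGroup hQ, mul_one]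

end Matrix

section Decomposition

variable {ι : Type*} [Fintype ι]

lemma hinner_eq_inner (x y : ι → ℂ) :
    hinner x y = ⟪WithLp.toLp 2 x, WithLp.toLp 2 y⟫_ℂ := by
  rw [EuclideanSpace.inner_toLp_toLp, dotProduct_comm]
  rfl

lemma hinner_eq_star_dotProduct (x y : ι → ℂ) : hinner x y = star x ⬝ᵥ y := rfl

lemma exists_eq_ofReal_smul_of_hinner_self_eq_one [Nonempty ι] (v : ι → ℂ) :
    ∃ r : ℝ, 0 ≤ r ∧ ∃ μ : ι → ℂ, hinner μ μ = 1 ∧ v = (r : ℂ) • μ := by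
  classical
  by_cases hv : v = 0
  · obtain ⟨i⟩ := ‹Nonempty ι›
    exact ⟨0, le_rfl, Pi.single i 1, by simp [hinner, Pi.single_apply], by simp [hv]⟩
  · set x : EuclideanSpace ℂ ι := WithLp.toLp 2 v
    have hx : x ≠ 0 := by simpa [x] using hv
    refine ⟨‖x‖, norm_nonneg _, ((‖x‖⁻¹ : ℝ) : ℂ) • v, ?_, ?_⟩
    · rw [hinner_eq_inner, inner_self_eq_norm_sq_to_K]
      simp [x, norm_smul, hx]
    · rw [smul_smul, ← Complex.ofReal_mul, mul_inv_cancel₀ (norm_ne_zero_iff.mpr hx),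
        Complex.ofReal_one, one_smul]

theorem exists_decomposition_of_transpose_mul_self_eq_diagonal [DecidableEq ι]
    {N : Matrix ι ι ℂ} {σ : ι → ℝ} (hσ : ∀ j, 0 ≤ σ j)
    (hN : Nᵀ * N = diagonal (fun j => (σ j : ℂ))) :
    ∃ (lam : ι → ℝ) (μ : ι → ι → ℂ), (∀ j, 0 ≤ lam j) ∧ (∀ j, hinner (μ j) (μ j) = 1) ∧
      N * Nᴴ = ∑ j, (lam j : ℂ) • vecMulVec (μ j) (cconj (μ j)) ∧
      (∀ i j, (Real.sqrt (lam i * lam j) : ℂ) * hinner (μ i) (cconj (μ j))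
        = if i = j then (σ j : ℂ) else 0) ∧
      ∀ j, lam j * ‖hinner (cconj (μ j)) (μ j)‖ = σ j := by
  choose r hr μ hμ hNμ using fun j =>
    haveI : Nonempty ι := ⟨j⟩
    exists_eq_ofReal_smul_of_hinner_self_eq_one (Nᵀ j)
  have hdot : ∀ i j, (r i : ℂ) * r j * (μ i ⬝ᵥ μ j) = if j = i then (σ i : ℂ) else 0 := by
    intro i j
    have h : Nᵀ i ⬝ᵥ Nᵀ j = (Nᵀ * N) i j := rfl
    rw [hN, hNμ, hNμ, smul_dotProduct, dotProduct_smul, smul_eq_mul, smul_eq_mul] at h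
    obtain rfl | hij := eq_or_ne i j
    · simp only [diagonal_apply_eq, if_true] at h ⊢
      linear_combination h
    · simp only [diagonal_apply_ne _ hij, if_neg hij.symm] at h ⊢
      linear_combination h
  refine ⟨fun j => r j ^ 2, μ, fun j => sq_nonneg _, hμ, ?_, fun i j => ?_, fun j => ?_⟩
  · ext i k
    simp only [mul_apply, conjTranspose_apply, Matrix.sum_apply, Matrix.smul_apply,
      vecMulVec_apply]
    refine Finset.sum_congr rfl fun j _ => ?_
    rw [show N i j = Nᵀ j i from rfl, show N k j = Nᵀ j k from rfl, hNμ j]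
    simp only [Pi.smul_apply, smul_eq_mul, star_mul', cconj, Complex.star_def,
      Complex.conj_ofReal, Complex.ofReal_pow]
    ring
  · rw [Real.sqrt_mul (sq_nonneg _), Real.sqrt_sq (hr i), Real.sqrt_sq (hr j),
      hinner_eq_star_dotProduct, show cconj (μ j) = star (μ j) from rfl, star_dotProduct_star]
    simpa [apply_ite star, mul_comm] using congrArg star (hdot j i)
  · rw [hinner_eq_star_dotProduct, show star (cconj (μ j)) = μ j from star_star (μ j)]
    simpa [abs_of_nonneg (hr j), abs_of_nonneg (hσ j), sq] using congrArg norm (hdot j j)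

lemma trace_sum_smul_vecMulVec_cconj {lam : ι → ℝ} {μ : ι → ι → ℂ}
    (hμ : ∀ j, hinner (μ j) (μ j) = 1) :
    (∑ j, (lam j : ℂ) • vecMulVec (μ j) (cconj (μ j))).trace = ∑ j, lam j := by
  have h : ∀ j, μ j ⬝ᵥ cconj (μ j) = 1 := fun j => by rw [dotProduct_comm, ← hμ j]; rfl
  simp [trace_sum, h]

end Decomposition

section Fidelity

open scoped MatrixOrder

variable {n : Type*} [Fintype n] [DecidableEq n]

lemma Matrix.sqrt_conjTranspose_mul_self_of_eq_takagi {S Q : Matrix n n ℂ}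
    (hQ : Q ∈ unitaryGroup n ℂ) {σ : n → ℝ} (hσ : ∀ i, 0 ≤ σ i)
    (hS : S = Q * diagonal (fun i => (σ i : ℂ)) * Qᵀ) :
    CFC.sqrt (Sᴴ * S) = Q.map star * diagonal (fun i => (σ i : ℂ)) * Qᵀ := by
  set D := diagonal (fun i => (σ i : ℂ))
  have hQQ : Qᴴ * Q = 1 := by rw [← star_eq_conjTranspose]; exact mem_unitaryGroup_iff'.mp hQ
  have hQQ' := transpose_mul_map_star_of_mem_unitaryGroup hQ
  have hDH : Dᴴ = D := by simp [D, diagonal_conjTranspose]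
  have hQH : (Q.map star)ᴴ = Qᵀ := by ext; simp
  have hD : D.PosSemidef := posSemidef_diagonal_iff.mpr fun i => Complex.zero_le_real.mpr (hσ i)
  refine CFC.sqrt_unique ?_ ?_
  · rw [hS, conjTranspose_mul, conjTranspose_mul, hDH, transpose_conjTranspose]
    simp only [mul_assoc]
    rw [← mul_assoc Qᵀ (Q.map star), hQQ', one_mul, ← mul_assoc Qᴴ Q, hQQ, one_mul]
  · rw [← hQH]
    exact (hD.mul_mul_conjTranspose_same _).nonneg

theorem Matrix.IsHermitian.exists_unitary_transpose_mul_self_eq_diagonal {B : Matrix n n ℂ}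
    (hB : B.IsHermitian) :
    ∃ U ∈ unitaryGroup n ℂ, ∃ σ : n → ℝ, (∀ i, 0 ≤ σ i) ∧
      (B * U) * (B * U)ᴴ = B * B ∧ (B * U)ᵀ * (B * U) = diagonal (fun i => (σ i : ℂ)) ∧
      CFC.sqrt (B * (B * B)ᵀ * B) = U * diagonal (fun i => (σ i : ℂ)) * Uᴴ := by
  obtain ⟨Q, hQ, σ, hσ, hS⟩ := exists_takagi_factorization (isSymm_transpose_mul_self B)
  have hQQ : Qᴴ * Q = 1 := by rw [← star_eq_conjTranspose]; exact mem_unitaryGroup_iff'.mp hQ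
  have hQQ' := transpose_mul_map_star_of_mem_unitaryGroup hQ
  have hU := map_star_mem_unitaryGroup_iff.mpr hQ
  have hQH : (Q.map star)ᴴ = Qᵀ := by ext; simp
  refine ⟨Q.map star, hU, σ, hσ, ?_, ?_, ?_⟩
  · rw [conjTranspose_mul, hB.eq, mul_assoc, ← mul_assoc (Q.map star), ← star_eq_conjTranspose,
      mem_unitaryGroup_iff.mp hU, one_mul]
  · rw [transpose_mul, ← conjTranspose_transpose, transpose_transpose, mul_assoc, ← mul_assoc Bᵀ,
      hS, conjTranspose_transpose]
    simp only [mul_assoc]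
    rw [hQQ', mul_one, ← mul_assoc, hQQ, one_mul]
  · have hBBt : B * (B * B)ᵀ * B = (Bᵀ * B)ᴴ * (Bᵀ * B) := by
      rw [conjTranspose_mul, hB.eq, conjTranspose_transpose_eq_transpose_conjTranspose, hB.eq,
        transpose_mul]
      simp only [mul_assoc]
    rw [hBBt, sqrt_conjTranspose_mul_self_of_eq_takagi hQ hσ hS, hQH]

lemma msqrt_eq_cfcSqrt {A : Matrix n n ℂ} (hA : A.PosSemidef) : msqrt A = CFC.sqrt A := by
  rw [CFC.sqrt_eq_real_sqrt A hA.nonneg, cfcₙ_eq_cfc, hA.1.cfc_eq, msqrt, dif_pos hA]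
  simp [IsHermitian.cfc, Unitary.conjStarAlgAut_apply, Function.comp_def]

theorem Matrix.PosSemidef.exists_transpose_mul_self_eq_diagonal {ρ : Matrix n n ℂ}
    (hρ : ρ.PosSemidef) :
    ∃ N : Matrix n n ℂ, ∃ U ∈ unitaryGroup n ℂ, ∃ σ : n → ℝ, (∀ i, 0 ≤ σ i) ∧
      N * Nᴴ = ρ ∧ Nᵀ * N = diagonal (fun i => (σ i : ℂ)) ∧
      msqrt (msqrt ρ * ρᵀ * msqrt ρ) = U * diagonal (fun i => (σ i : ℂ)) * Uᴴ := by
  have hB : (CFC.sqrt ρ).PosSemidef := (CFC.sqrt_nonneg ρ).posSemidef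
  obtain ⟨U, hU, σ, hσ, hNN, hNtN, hsqrt⟩ := hB.1.exists_unitary_transpose_mul_self_eq_diagonal
  rw [CFC.sqrt_mul_sqrt_self ρ hρ.nonneg] at hNN hsqrt
  have hρB := hρ.transpose.mul_mul_conjTranspose_same (CFC.sqrt ρ)
  rw [hB.1.eq] at hρB
  refine ⟨_, U, hU, σ, hσ, hNN, hNtN, ?_⟩
  rw [msqrt_eq_cfcSqrt hρ, msqrt_eq_cfcSqrt hρB, hsqrt]

lemma Matrix.trace_mul_diagonal_mul_conjTranspose {U : Matrix n n ℂ} (hU : U ∈ unitaryGroup n ℂ)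
    (d : n → ℂ) : (U * diagonal d * Uᴴ).trace = ∑ i, d i := by
  rw [trace_mul_cycle, ← star_eq_conjTranspose, mem_unitaryGroup_iff'.mp hU, one_mul,
    trace_diagonal]

end Fidelity

/-- every density matrix admits a conjugate-orthogonal pure-state
decomposition, with diagonal values D_j the eigenvalues of √(√ρ ρᵀ √ρ); consequently
Σ_j λ_j |⟨μ_j*,μ_j⟩| = √F(ρ,ρᵀ). -/
theorem conjugate_orthogonal_decomposition {d : ℕ}
    (ρ : Matrix (Fin d) (Fin d) ℂ) (hρ : IsDensity ρ) :
    ∃ (lam : Fin d → ℝ) (μ : Fin d → Fin d → ℂ) (D : Fin d → ℝ),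
      (∀ j, 0 ≤ lam j) ∧ (∑ j, lam j = 1) ∧
      (∀ j, hinner (μ j) (μ j) = 1) ∧
      ρ = ∑ j, (lam j : ℂ) • Matrix.vecMulVec (μ j) (cconj (μ j)) ∧
      (∀ j, 0 ≤ D j) ∧
      (∀ i j, (Real.sqrt (lam i * lam j) : ℂ) * hinner (μ i) (cconj (μ j))
        = if i = j then (D j : ℂ) else 0) ∧
      (∃ U ∈ Matrix.unitaryGroup (Fin d) ℂ,
        msqrt (msqrt ρ * ρᵀ * msqrt ρ)
          = U * Matrix.diagonal (fun j => (D j : ℂ)) * Uᴴ) ∧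
      ∑ j, lam j * ‖hinner (cconj (μ j)) (μ j)‖ = rootFid ρ ρᵀ := by
  obtain ⟨hρ, htr⟩ := hρ
  obtain ⟨N, U, hU, D, hD, hNN, hNtN, hmsqrt⟩ := hρ.exists_transpose_mul_self_eq_diagonal
  obtain ⟨lam, μ, hlam, hμ, hdecomp, horth, hnorm⟩ :=
    exists_decomposition_of_transpose_mul_self_eq_diagonal hD hNtN
  rw [hNN] at hdecomp
  refine ⟨lam, μ, D, hlam, ?_, hμ, hdecomp, hD, horth, ⟨U, hU, hmsqrt⟩, ?_⟩
  · have := trace_sum_smul_vecMulVec_cconj (lam := lam) hμ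
    rw [← hdecomp, htr] at this
    exact_mod_cast this.symm
  · rw [Finset.sum_congr rfl fun j _ => hnorm j, rootFid, hmsqrt,
      trace_mul_diagonal_mul_conjTranspose hU]
    simp
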